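/- Let M be an n×n matrix over RatFunc ℂ all of whose entries have intDegree ≤ 0, and let ε > 0. Then every eigenvalue of M is an ε-pseudoeigenvalue: every complex root λ₀ of (det (M - X • 1)).num belongs to σ_ε(M) = closure {λ ∈ dom(N) : ‖N(λ)‖ > ε⁻¹}, where N := (M - X • 1)⁻¹ is the resolvent of M. -/

import Mathlib

set_option synthInstance.maxHeartbeats 1000000
set_option maxHeartbeats 1000000

open Matrix

/-- The L2 operator norm of a complex matrix (the norm induced by the Euclidean norm). -/
noncomputable def l2OpNorm {a b : Type} [Fintype a] [Fintype b] [DecidableEq b]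
    (A : Matrix a b ℂ) : ℝ :=
  ‖LinearMap.toContinuousLinearMap (Matrix.toEuclideanLin A)‖

/-- Entrywise evaluation of a matrix over `RatFunc ℂ` at `lam`. -/
noncomputable def evalMat {a b : Type} (A : Matrix a b (RatFunc ℂ)) (lam : ℂ) : Matrix a b ℂ :=
  Matrix.of fun i j => RatFunc.eval (RingHom.id ℂ) lam (A i j)

/-- The ε-pseudospectrum of a matrix over `RatFunc ℂ`, defined via the resolvent
`N = (A - X•1)⁻¹` and the L2 operator norm. -/
noncomputable def pseudoSpec {a : Type} [Fintype a] [DecidableEq a]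
    (A : Matrix a a (RatFunc ℂ)) (eps : ℝ) : Set ℂ :=
  closure {lam : ℂ |
    (∀ i j, (((A - (RatFunc.X : RatFunc ℂ) • 1)⁻¹) i j).denom.eval lam ≠ 0) ∧
    eps⁻¹ < l2OpNorm (evalMat (A - (RatFunc.X : RatFunc ℂ) • 1)⁻¹ lam)}

/-!
Over `RatFunc K`, the valuation at infinity of `X` is larger than that of every entry of `M`, so
`X` is not an eigenvalue of `M` and `M - X • 1` is invertible. If `det (M - X • 1)` vanishes at
`λ`, some entry of the resolvent `N` has a pole there: otherwise `det N * det (M - X • 1) = 1`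
could be evaluated at `λ`. Near that pole the entry, and with it `‖N(z)‖`, tends to infinity, so
every punctured neighbourhood of `λ` meets the set whose closure is the pseudospectrum.
-/

open Filter Polynomial Topology

theorem Matrix.eq_zero_of_mulVec_eq_smul_of_valuation_le_one {F Γ ι : Type*} [Field F]
    [LinearOrderedCommGroupWithZero Γ] [Fintype ι] (w : Valuation F Γ) {M : Matrix ι ι F}
    (hM : ∀ i j, w (M i j) ≤ 1) {x : F} (hx : 1 < w x) {v : ι → F} (hv : M *ᵥ v = x • v) :
    v = 0 := by
  by_contra hv0
  obtain ⟨i, hi⟩ := Function.ne_iff.mp hv0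
  obtain ⟨i₀, -, hmax⟩ :=
    Finset.exists_max_image Finset.univ (fun i => w (v i)) ⟨i, Finset.mem_univ i⟩
  have hpos : 0 < w (v i₀) :=
    (w.pos_iff.mpr hi).trans_le (hmax i (Finset.mem_univ i))
  have hle : w ((M *ᵥ v) i₀) ≤ w (v i₀) :=
    w.map_sum_le fun j _ => by
      simpa only [w.map_mul, one_mul] using
        mul_le_mul' (hM i₀ j) (hmax j (Finset.mem_univ j))
  rw [hv, Pi.smul_apply, smul_eq_mul, w.map_mul] at hle
  exact hle.not_gt (lt_mul_of_one_lt_left hpos hx)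

theorem RatFunc.inftyValuation_le_one_of_intDegree_nonpos {K : Type*} [Field K]
    [DecidableEq (RatFunc K)] {x : RatFunc K} (hx : x.intDegree ≤ 0) :
    RatFunc.inftyValuation K x ≤ 1 := by
  rcases eq_or_ne x 0 with rfl | hx0
  · simp
  · rw [RatFunc.inftyValuation_apply, RatFunc.inftyValuation_of_nonzero K hx0, ← WithZero.exp_zero]
    exact WithZero.exp_le_exp.mpr hx

theorem Matrix.det_sub_X_smul_one_ne_zero {K ι : Type*} [Field K] [Fintype ι] [DecidableEq ι]
    {M : Matrix ι ι (RatFunc K)} (hM : ∀ i j, (M i j).intDegree ≤ 0) :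
    (M - (RatFunc.X : RatFunc K) • 1).det ≠ 0 := by
  classical
  intro hdet
  obtain ⟨v, hv, hMv⟩ := Matrix.exists_mulVec_eq_zero_iff.mpr hdet
  rw [Matrix.sub_mulVec, Matrix.smul_mulVec, Matrix.one_mulVec, sub_eq_zero] at hMv
  refine hv (Matrix.eq_zero_of_mulVec_eq_smul_of_valuation_le_one (RatFunc.inftyValuation K)
    (fun i j => RatFunc.inftyValuation_le_one_of_intDegree_nonpos (hM i j)) ?_ hMv)
  rw [RatFunc.inftyValuation.X, ← WithZero.exp_zero]
  exact WithZero.exp_lt_exp.mpr one_pos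

theorem Polynomial.eventually_eval_ne_zero_nhdsNE {R : Type*} [CommRing R] [IsDomain R]
    [TopologicalSpace R] [T1Space R] {p : R[X]} (hp : p ≠ 0) (a : R) :
    ∀ᶠ z in 𝓝[≠] a, p.eval z ≠ 0 :=
  (finite_setOfPred_isRoot hp).eventually_cofinite_notMem.filter_mono (nhdsNE_le_cofinite a)

namespace RatFunc

variable {K : Type*} [Field K]

theorem denom_eval_ne_zero_of_num_eval_eq_zero {x : RatFunc K} {a : K} (h : x.num.eval a = 0) :
    x.denom.eval a ≠ 0 := fun hd =>
  not_isUnit_X_sub_C a <|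
    (isCoprime_num_denom x).isUnit_of_dvd' (dvd_iff_isRoot.mpr h) (dvd_iff_isRoot.mpr hd)

theorem denom_neg_dvd (x : RatFunc K) : (-x).denom ∣ x.denom := by
  have h := denom_mul_dvd (C (-1)) x
  rwa [denom_C, one_mul, map_neg, map_one, neg_one_mul] at h

def regularAt (a : K) : Subring (RatFunc K) where
  carrier := {x | x.denom.eval a ≠ 0}
  one_mem' := by simp
  zero_mem' := by simp
  mul_mem' {x y} hx hy :=
    ne_zero_of_dvd_ne_zero (by simpa using mul_ne_zero hx hy) (eval_dvd (denom_mul_dvd x y))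
  add_mem' {x y} hx hy :=
    ne_zero_of_dvd_ne_zero (by simpa using mul_ne_zero hx hy) (eval_dvd (denom_add_dvd x y))
  neg_mem' {x} hx := ne_zero_of_dvd_ne_zero hx (eval_dvd (denom_neg_dvd x))

theorem denom_eval_det_ne_zero {ι : Type*} [Fintype ι] [DecidableEq ι] {a : K}
    {N : Matrix ι ι (RatFunc K)} (hN : ∀ i j, (N i j).denom.eval a ≠ 0) :
    N.det.denom.eval a ≠ 0 := by
  let N' : Matrix ι ι (regularAt a) := Matrix.of fun i j => ⟨N i j, hN i j⟩
  have hN' : (regularAt a).subtype.mapMatrix N' = N := rfl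
  rw [← hN', ← RingHom.map_det]
  exact N'.det.2

end RatFunc

theorem Matrix.exists_denom_eval_inv_apply_eq_zero {K ι : Type*} [Field K] [Fintype ι]
    [DecidableEq ι] {A : Matrix ι ι (RatFunc K)} (hA : A.det ≠ 0) {a : K}
    (ha : A.det.num.eval a = 0) : ∃ i j, (A⁻¹ i j).denom.eval a = 0 := by
  by_contra! hreg
  have hinv : A⁻¹.det * A.det = 1 := by
    rw [← det_mul, nonsing_inv_mul _ (isUnit_iff_ne_zero.mpr hA), det_one]
  have heval := RatFunc.eval_mul (f := RingHom.id K) (a := a)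
    (RatFunc.denom_eval_det_ne_zero hreg) (RatFunc.denom_eval_ne_zero_of_num_eval_eq_zero ha)
  have hzero : A.det.eval (RingHom.id K) a = 0 := by simp [RatFunc.eval, ha]
  rw [hinv, RatFunc.eval_one, hzero, mul_zero] at heval
  exact one_ne_zero heval

theorem RatFunc.tendsto_norm_eval_nhdsNE_atTop {𝕜 : Type*} [NontriviallyNormedField 𝕜]
    {x : RatFunc 𝕜} {a : 𝕜} (ha : x.denom.eval a = 0) :
    Tendsto (fun z => ‖x.eval (RingHom.id 𝕜) z‖) (𝓝[≠] a) atTop := by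
  have hnum : 0 < ‖x.num.eval a‖ :=
    norm_pos_iff.mpr fun h => denom_eval_ne_zero_of_num_eval_eq_zero h ha
  have hden : Tendsto (fun z => ‖x.denom.eval z‖) (𝓝[≠] a) (𝓝[>] 0) :=
    tendsto_nhdsWithin_iff.mpr
      ⟨by simpa [ha] using (x.denom.continuous.tendsto a).norm.mono_left nhdsWithin_le_nhds,
        (eventually_eval_ne_zero_nhdsNE x.denom_ne_zero a).mono fun z hz => norm_pos_iff.mpr hz⟩
  simpa [RatFunc.eval, norm_div, div_eq_mul_inv] using
    ((x.num.continuous.tendsto a).norm.mono_left nhdsWithin_le_nhds).pos_mul_atTop hnum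
      (tendsto_inv_nhdsGT_zero.comp hden)

theorem norm_apply_le_l2OpNorm {ι κ : Type} [Fintype ι] [Fintype κ] [DecidableEq κ]
    (A : Matrix ι κ ℂ) (i : ι) (j : κ) : ‖A i j‖ ≤ l2OpNorm A := by
  let T := LinearMap.toContinuousLinearMap (Matrix.toEuclideanLin A)
  calc ‖A i j‖ = ‖T (EuclideanSpace.single j 1) i‖ := by simp [T]
    _ ≤ ‖T (EuclideanSpace.single j 1)‖ := PiLp.norm_apply_le _ i
    _ ≤ ‖T‖ * ‖EuclideanSpace.single j (1 : ℂ)‖ := T.le_opNorm _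
    _ = l2OpNorm A := by simp [T, l2OpNorm]

theorem eigenvalue_mem_pseudoSpec_general {n : ℕ}
    (M : Matrix (Fin n) (Fin n) (RatFunc ℂ))
    (hdeg : ∀ i j, (M i j).intDegree ≤ 0)
    (eps : ℝ)
    (lam : ℂ) (h : (((M - (RatFunc.X : RatFunc ℂ) • 1).det).num).eval lam = 0) :
    lam ∈ pseudoSpec M eps := by
  set N := (M - (RatFunc.X : RatFunc ℂ) • 1)⁻¹
  obtain ⟨i, j, hpole⟩ :=
    Matrix.exists_denom_eval_inv_apply_eq_zero (Matrix.det_sub_X_smul_one_ne_zero hdeg) h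
  have hregular : ∀ᶠ z in 𝓝[≠] lam, ∀ k l, (N k l).denom.eval z ≠ 0 := by
    simp only [eventually_all]
    exact fun k l => eventually_eval_ne_zero_nhdsNE (RatFunc.denom_ne_zero _) lam
  have hlarge : ∀ᶠ z in 𝓝[≠] lam, eps⁻¹ < l2OpNorm (evalMat N z) :=
    ((RatFunc.tendsto_norm_eval_nhdsNE_atTop hpole).eventually_gt_atTop eps⁻¹).mono
      fun z hz => hz.trans_le (norm_apply_le_l2OpNorm (evalMat N z) i j)
  exact mem_closure_iff_frequently.mpr
    ((hregular.and hlarge).frequently.filter_mono nhdsWithin_le_nhds)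

theorem eigenvalue_mem_pseudoSpec {n : ℕ}
    (M : Matrix (Fin n) (Fin n) (RatFunc ℂ))
    (hdeg : ∀ i j, (M i j).intDegree ≤ 0)
    (eps : ℝ) (heps : 0 < eps)
    (lam : ℂ) (h : (((M - (RatFunc.X : RatFunc ℂ) • 1).det).num).eval lam = 0) :
    lam ∈ pseudoSpec M eps :=
  eigenvalue_mem_pseudoSpec_general M hdeg eps lam h
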